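/- Chain lemma for piecewise-monotone paths: let X be a preordered set, γ : ℝ → X a function, a ≤ b real numbers, and I a finite family of open intervals of ℝ covering [a,b] such that γ is monotone (order-preserving) on each interval of the family. Then γ(a) ≤ γ(b). -/

import Mathlib

/-!
Take `s` the supremum of the points `x ∈ [a, b]` with `γ a ≤ γ x`. Monotonicity of `γ` on a
neighbourhood of `s` gives `γ a ≤ γ s` from points of the set just below `s`, and, if `s < b`,
it also puts points just above `s` into the set, which is absurd. So `s = b`.
-/

open Set Filter Topology

theorem le_of_forall_mem_Icc_exists_mem_nhds_monotoneOn {α X : Type*}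
    [ConditionallyCompleteLinearOrder α] [TopologicalSpace α] [OrderTopology α]
    [DenselyOrdered α] [Preorder X] {f : α → X} {a b : α} (hab : a ≤ b)
    (h : ∀ x ∈ Icc a b, ∃ U ∈ 𝓝 x, MonotoneOn f U) : f a ≤ f b := by
  set T := {x ∈ Icc a b | f a ≤ f x}
  have haT : a ∈ T := ⟨⟨le_rfl, hab⟩, le_rfl⟩
  have hbdd : BddAbove T := ⟨b, fun x hx ↦ hx.1.2⟩
  set s := sSup T
  have hs : s ∈ Icc a b := ⟨le_csSup hbdd haT, csSup_le ⟨a, haT⟩ fun x hx ↦ hx.1.2⟩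
  obtain ⟨U, hU, hmono⟩ := h s hs
  have hsT : s ∈ T := by
    obtain ⟨t, htT, htU, hts⟩ : ∃ t ∈ T, t ∈ U ∧ t ≤ s :=
      (((isLUB_csSup ⟨a, haT⟩ hbdd).frequently_mem ⟨a, haT⟩).and_eventually
        (Eventually.and (mem_nhdsWithin_of_mem_nhds hU) self_mem_nhdsWithin)).exists
    exact ⟨hs, htT.2.trans (hmono htU (mem_of_mem_nhds hU) hts)⟩
  rcases hs.2.eq_or_lt with hsb | hsb
  · exact hsb ▸ hsT.2
  obtain ⟨u, ⟨hsu, hub⟩, hsuU⟩ := exists_Ico_subset_of_mem_nhds' hU hsb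
  obtain ⟨x, hsx, hxu⟩ := exists_between hsu
  have hxT : x ∈ T :=
    ⟨⟨hs.1.trans hsx.le, hxu.le.trans hub⟩,
      hsT.2.trans (hmono (mem_of_mem_nhds hU) (hsuU ⟨hsx.le, hxu⟩) hsx.le)⟩
  exact absurd (le_csSup hbdd hxT) (not_le.mpr hsx)

theorem chain_lemma_piecewise_monotone_general {X : Type*} [Preorder X] (γ : ℝ → X)
    {a b : ℝ} (hab : a ≤ b) {ι : Type*} (c d : ι → ℝ)
    (hcover : Set.Icc a b ⊆ ⋃ i, Set.Ioo (c i) (d i))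
    (hmono : ∀ i, MonotoneOn γ (Set.Ioo (c i) (d i))) :
    γ a ≤ γ b := by
  refine le_of_forall_mem_Icc_exists_mem_nhds_monotoneOn hab fun x hx ↦ ?_
  obtain ⟨i, hi⟩ := mem_iUnion.mp (hcover hx)
  exact ⟨Ioo (c i) (d i), isOpen_Ioo.mem_nhds hi, hmono i⟩

theorem chain_lemma_piecewise_monotone {X : Type*} [Preorder X] (γ : ℝ → X)
    {a b : ℝ} (hab : a ≤ b) {ι : Type*} [Finite ι] (c d : ι → ℝ)
    (hcover : Set.Icc a b ⊆ ⋃ i, Set.Ioo (c i) (d i))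
    (hmono : ∀ i, MonotoneOn γ (Set.Ioo (c i) (d i))) :
    γ a ≤ γ b :=
  chain_lemma_piecewise_monotone_general γ hab c d hcover hmono
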